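/- arXiv:2205.04019 — 5 statements merged into one kernel-verified Lean document; each statement's English description precedes it below -/
import Mathlib

section
/- Let S₁, …, S_d be real symmetric N×N matrices that pairwise commute, and suppose there exist an orthonormal basis v₁, …, v_N of ℝ^N and points λ₁, …, λ_N in the cube [μ, ν] = [μ₁,ν₁] × ⋯ × [μ_d,ν_d] ⊂ ℝ^d such that S_k v_i = (λ_i)_k v_i for all 1 ≤ k ≤ d and 1 ≤ i ≤ N. Let h and g be real polynomials in d variables, set H = h(S₁, …, S_d) and G = g(S₁, …, S_d), and suppose b := sup_{t ∈ [μ,ν]} |1 − g(t) h(t)| < 1. Then H is invertible, and for every y ∈ ℝ^N and every initial vector x⁰ ∈ ℝ^N, the iterates defined by e^(m) = H x^(m-1) − y and x^(m) = x^(m-1) − G e^(m) (with x^(0) = x⁰) converge exponentially to H⁻¹y; in fact ‖x^(m) − H⁻¹y‖₂ ≤ b^m ‖x⁰ − H⁻¹y‖₂ for all m ≥ 0. -/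
open Matrix

/-- The Euclidean norm on `ℝ^N`. -/
noncomputable def euclNorm {N : ℕ} (v : Fin N → ℝ) : ℝ := Real.sqrt (∑ i, v i ^ 2)

/-- The polynomial graph filter `q(S₁, …, S_d)` associated with a multivariate
polynomial `q` and (commuting) matrices `S₁, …, S_d`. -/
noncomputable def polyFilter {N d : ℕ} (q : MvPolynomial (Fin d) ℝ)
    (S : Fin d → Matrix (Fin N) (Fin N) ℝ) : Matrix (Fin N) (Fin N) ℝ :=
  ∑ m ∈ q.support, q.coeff m • ((List.finRange d).map fun k => S k ^ m k).prod

lemma QN.sum_mulVec {N : ℕ} {ι : Type*} (s : Finset ι) (A : ι → Matrix (Fin N) (Fin N) ℝ)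
    (x : Fin N → ℝ) : (∑ i ∈ s, A i) *ᵥ x = ∑ i ∈ s, A i *ᵥ x := by
  classical
  induction s using Finset.induction with
  | empty => simp
  | insert a s hni ih => simp [Finset.sum_insert hni, Matrix.add_mulVec, ih]

lemma QN.pow_mulVec_eig {N : ℕ} (A : Matrix (Fin N) (Fin N) ℝ) (c : ℝ) (u : Fin N → ℝ)
    (hA : A *ᵥ u = c • u) (e : ℕ) : (A ^ e) *ᵥ u = c ^ e • u := by
  induction e with
  | zero => simp
  | succ n ih =>
    rw [pow_succ, ← Matrix.mulVec_mulVec, hA, Matrix.mulVec_smul, ih, smul_smul, pow_succ]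
    ring_nf

lemma QN.listprod_mulVec {N d : ℕ} (T : Fin d → Matrix (Fin N) (Fin N) ℝ)
    (c : Fin d → ℝ) (u : Fin N → ℝ) (hT : ∀ k, T k *ᵥ u = c k • u) (l : List (Fin d)) :
    (l.map T).prod *ᵥ u = (l.map c).prod • u := by
  induction l with
  | nil => simp
  | cons a t ih =>
    simp only [List.map_cons, List.prod_cons, ← Matrix.mulVec_mulVec, ih,
      Matrix.mulVec_smul, hT, smul_smul, mul_comm]

lemma QN.polyFilter_mulVec_eig {N d : ℕ} (q : MvPolynomial (Fin d) ℝ)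
    (S : Fin d → Matrix (Fin N) (Fin N) ℝ) (c : Fin d → ℝ) (u : Fin N → ℝ)
    (hS : ∀ k, S k *ᵥ u = c k • u) :
    (polyFilter q S) *ᵥ u = (MvPolynomial.eval c q) • u := by
  unfold polyFilter
  rw [QN.sum_mulVec, MvPolynomial.eval_eq']
  rw [Finset.sum_smul]
  refine Finset.sum_congr rfl fun m _ => ?_
  rw [Matrix.smul_mulVec,
    QN.listprod_mulVec (fun k => S k ^ m k) (fun k => c k ^ m k) u
      (fun k => QN.pow_mulVec_eig (S k) (c k) u (hS k) (m k)),
    smul_smul, ← Fin.prod_univ_def]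

lemma QN.euclNorm_nonneg {N : ℕ} (x : Fin N → ℝ) : 0 ≤ euclNorm x := Real.sqrt_nonneg _

lemma QN.mulVec_isometry {N : ℕ} (A : Matrix (Fin N) (Fin N) ℝ) (hA : Aᵀ * A = 1)
    (u : Fin N → ℝ) : euclNorm (A *ᵥ u) = euclNorm u := by
  have key : ∀ x : Fin N → ℝ, euclNorm x = Real.sqrt (x ⬝ᵥ x) := by
    intro x; unfold euclNorm; congr 1; simp [dotProduct, sq]
  rw [key, key u]
  congr 1
  rw [Matrix.dotProduct_mulVec, ← Matrix.vecMul_transpose, Matrix.vecMul_vecMul, hA,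
    Matrix.vecMul_one]

lemma QN.euclNorm_diagonal_le {N : ℕ} (w : Fin N → ℝ) (b : ℝ) (hb0 : 0 ≤ b)
    (hw : ∀ i, |w i| ≤ b) (u : Fin N → ℝ) :
    euclNorm (Matrix.diagonal w *ᵥ u) ≤ b * euclNorm u := by
  unfold euclNorm
  rw [← Real.sqrt_sq hb0, ← Real.sqrt_mul (sq_nonneg b)]
  apply Real.sqrt_le_sqrt
  rw [Finset.mul_sum]
  refine Finset.sum_le_sum fun i _ => ?_
  rw [Matrix.mulVec_diagonal, mul_pow]
  have : w i ^ 2 ≤ b ^ 2 := by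
    rw [← sq_abs]
    exact pow_le_pow_left₀ (abs_nonneg _) (hw i) 2
  exact mul_le_mul_of_nonneg_right this (sq_nonneg _)

lemma QN.abs_le_euclNorm {N : ℕ} (x : Fin N → ℝ) (i : Fin N) : |x i| ≤ euclNorm x := by
  rw [← Real.sqrt_sq_eq_abs]
  exact Real.sqrt_le_sqrt (Finset.single_le_sum (fun j _ => sq_nonneg (x j)) (Finset.mem_univ i))

/-- if `b := sup_{t ∈ [μ,ν]} |1 − g(t)h(t)| < 1` for commuting
symmetric shifts with a common orthonormal eigenbasis and joint spectrum in
`[μ, ν]`, then `H = h(S₁,…,S_d)` is invertible, and the quasi-Newton iterates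
with approximation filter `G = g(S₁,…,S_d)` converge exponentially to `H⁻¹y`:
`‖x^(m) − H⁻¹y‖₂ ≤ b^m ‖x⁰ − H⁻¹y‖₂` for all `m ≥ 0`. -/
theorem quasiNewton_polyFilter_exponential_convergence {N d : ℕ}
    (S : Fin d → Matrix (Fin N) (Fin N) ℝ)
    (hsym : ∀ k, (S k).IsSymm)
    (hcomm : ∀ k k', S k * S k' = S k' * S k)
    (μ ν : Fin d → ℝ)
    (v : Fin N → Fin N → ℝ)
    (hon : ∀ i j, (∑ t, v i t * v j t) = if i = j then (1 : ℝ) else 0)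
    (lam : Fin N → Fin d → ℝ)
    (hlam : ∀ i, lam i ∈ Set.Icc μ ν)
    (heig : ∀ k i, (S k).mulVec (v i) = lam i k • v i)
    (h g : MvPolynomial (Fin d) ℝ)
    (b : ℝ)
    (hb : b = sSup ((fun t : Fin d → ℝ =>
      |1 - MvPolynomial.eval t g * MvPolynomial.eval t h|) '' Set.Icc μ ν))
    (hb1 : b < 1) :
    IsUnit (polyFilter h S).det ∧
      ∀ (y x0 : Fin N → ℝ) (xs : ℕ → Fin N → ℝ),
        xs 0 = x0 →
        (∀ m : ℕ, xs (m + 1)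
          = xs m - (polyFilter g S).mulVec ((polyFilter h S).mulVec (xs m) - y)) →
        (∀ m : ℕ, euclNorm (xs m - (polyFilter h S)⁻¹.mulVec y)
            ≤ b ^ m * euclNorm (x0 - (polyFilter h S)⁻¹.mulVec y)) ∧
          Filter.Tendsto xs Filter.atTop (nhds ((polyFilter h S)⁻¹.mulVec y)) := by
  classical
  set V : Matrix (Fin N) (Fin N) ℝ := Matrix.of v with hVdef
  have hVVt : V * Vᵀ = 1 := by
    ext i j
    simp only [Matrix.mul_apply, Matrix.transpose_apply, Matrix.one_apply, hVdef,
      Matrix.of_apply]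
    exact hon i j
  have hVtV : Vᵀ * V = 1 := mul_eq_one_comm.mp hVVt
  -- diagonalization of polynomial filters
  have hdiag : ∀ q : MvPolynomial (Fin d) ℝ,
      polyFilter q S = Vᵀ * Matrix.diagonal (fun i => MvPolynomial.eval (lam i) q) * V := by
    intro q
    have h1 : polyFilter q S * Vᵀ
        = Vᵀ * Matrix.diagonal (fun i => MvPolynomial.eval (lam i) q) := by
      ext j i
      have he := QN.polyFilter_mulVec_eig q S (lam i) (v i) (fun k => heig k i)
      have lhs : (polyFilter q S * Vᵀ) j i = (polyFilter q S *ᵥ v i) j := by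
        simp [Matrix.mul_apply, Matrix.mulVec, dotProduct, hVdef]
      rw [lhs, he, Matrix.mul_diagonal]
      simp [hVdef, mul_comm]
    calc polyFilter q S = polyFilter q S * (Vᵀ * V) := by rw [hVtV, mul_one]
      _ = polyFilter q S * Vᵀ * V := by rw [mul_assoc]
      _ = _ := by rw [h1]
  -- boundedness and nonnegativity of b
  have hcont : Continuous fun t : Fin d → ℝ =>
      |1 - MvPolynomial.eval t g * MvPolynomial.eval t h| :=
    (continuous_const.sub ((MvPolynomial.continuous_eval g).mul
      (MvPolynomial.continuous_eval h))).abs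
  have hbdd : BddAbove ((fun t : Fin d → ℝ =>
      |1 - MvPolynomial.eval t g * MvPolynomial.eval t h|) '' Set.Icc μ ν) :=
    (isCompact_Icc.image hcont).bddAbove
  have hb0 : 0 ≤ b := by
    rcases Set.eq_empty_or_nonempty (Set.Icc μ ν) with he | ⟨t, ht⟩
    · rw [hb, he, Set.image_empty, Real.sSup_empty]
    · exact le_trans (abs_nonneg _) (hb ▸ le_csSup hbdd (Set.mem_image_of_mem _ ht))
  have hble : ∀ i, |1 - MvPolynomial.eval (lam i) g * MvPolynomial.eval (lam i) h| ≤ b :=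
    fun i => hb ▸ le_csSup hbdd (Set.mem_image_of_mem _ (hlam i))
  have hne : ∀ i, MvPolynomial.eval (lam i) h ≠ 0 := by
    intro i hi
    have := hble i
    rw [hi, mul_zero, sub_zero, abs_one] at this
    linarith
  -- invertibility
  have hdetV : V.det * Vᵀ.det = 1 := by rw [← Matrix.det_mul, hVVt, Matrix.det_one]
  have hdetH : (polyFilter h S).det
      = ∏ i, MvPolynomial.eval (lam i) h := by
    rw [hdiag h, Matrix.det_mul, Matrix.det_mul, Matrix.det_diagonal]
    have : Vᵀ.det * (∏ i, MvPolynomial.eval (lam i) h) * V.det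
        = (∏ i, MvPolynomial.eval (lam i) h) * (V.det * Vᵀ.det) := by ring
    rw [this, hdetV, mul_one]
  have hdetU : IsUnit (polyFilter h S).det := by
    rw [hdetH, isUnit_iff_ne_zero]
    exact Finset.prod_ne_zero_iff.mpr fun i _ => hne i
  refine ⟨hdetU, ?_⟩
  intro y x0 xs hxs0 hxsrec
  set H := polyFilter h S with hH
  set G := polyFilter g S with hG
  set xstar := H⁻¹ *ᵥ y with hxstar
  have hHx : H *ᵥ xstar = y := by
    rw [hxstar, Matrix.mulVec_mulVec, Matrix.mul_nonsing_inv _ hdetU, Matrix.one_mulVec]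
  -- contraction matrix
  set w : Fin N → ℝ := fun i =>
    1 - MvPolynomial.eval (lam i) g * MvPolynomial.eval (lam i) h with hw
  have hGH : (1 : Matrix (Fin N) (Fin N) ℝ) - G * H = Vᵀ * Matrix.diagonal w * V := by
    rw [hG, hH, hdiag g, hdiag h]
    have key : ∀ D E : Matrix (Fin N) (Fin N) ℝ,
        Vᵀ * D * V * (Vᵀ * E * V) = Vᵀ * (D * E) * V := by
      intro D E
      calc Vᵀ * D * V * (Vᵀ * E * V) = Vᵀ * D * (V * Vᵀ) * E * V := by
            simp only [Matrix.mul_assoc]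
        _ = Vᵀ * (D * E) * V := by
            rw [hVVt, Matrix.mul_one]; simp only [Matrix.mul_assoc]
    rw [key, Matrix.diagonal_mul_diagonal]
    have hone : (1 : Matrix (Fin N) (Fin N) ℝ)
        = Vᵀ * Matrix.diagonal (fun _ => (1 : ℝ)) * V := by
      rw [Matrix.diagonal_one, Matrix.mul_one, hVtV]
    rw [hone, ← Matrix.sub_mul, ← Matrix.mul_sub, Matrix.diagonal_sub]
  have hcontr : ∀ z : Fin N → ℝ,
      euclNorm (((1 : Matrix (Fin N) (Fin N) ℝ) - G * H) *ᵥ z) ≤ b * euclNorm z := by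
    intro z
    rw [hGH, ← Matrix.mulVec_mulVec, ← Matrix.mulVec_mulVec,
      QN.mulVec_isometry Vᵀ (by rw [Matrix.transpose_transpose, hVVt]) _]
    calc euclNorm (Matrix.diagonal w *ᵥ (V *ᵥ z)) ≤ b * euclNorm (V *ᵥ z) :=
        QN.euclNorm_diagonal_le w b hb0 (fun i => hble i) _
      _ = b * euclNorm z := by rw [QN.mulVec_isometry V hVtV]
  have step : ∀ m, xs (m + 1) - xstar
      = ((1 : Matrix (Fin N) (Fin N) ℝ) - G * H) *ᵥ (xs m - xstar) := by
    intro m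
    rw [hxsrec m]
    have h1 : H *ᵥ xs m - y = H *ᵥ (xs m - xstar) := by
      rw [Matrix.mulVec_sub, hHx]
    rw [h1, Matrix.sub_mulVec, Matrix.one_mulVec, Matrix.mulVec_mulVec]
    abel
  have hbound : ∀ m, euclNorm (xs m - xstar) ≤ b ^ m * euclNorm (x0 - xstar) := by
    intro m
    induction m with
    | zero => rw [hxs0, pow_zero, one_mul]
    | succ n ih =>
      rw [step n] at *
      calc euclNorm (((1 : Matrix (Fin N) (Fin N) ℝ) - G * H) *ᵥ (xs n - xstar))
          ≤ b * euclNorm (xs n - xstar) := hcontr _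
        _ ≤ b * (b ^ n * euclNorm (x0 - xstar)) := mul_le_mul_of_nonneg_left ih hb0
        _ = b ^ (n + 1) * euclNorm (x0 - xstar) := by ring
  refine ⟨hbound, ?_⟩
  have hlim : Filter.Tendsto (fun m => b ^ m * euclNorm (x0 - xstar))
      Filter.atTop (nhds 0) := by
    have := (tendsto_pow_atTop_nhds_zero_of_lt_one hb0 hb1).mul_const
      (euclNorm (x0 - xstar))
    simpa using this
  rw [tendsto_pi_nhds]
  intro i
  rw [tendsto_iff_dist_tendsto_zero]
  have hcoord : ∀ m, dist (xs m i) (xstar i) ≤ b ^ m * euclNorm (x0 - xstar) := by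
    intro m
    have h1 : dist (xs m i) (xstar i) = |(xs m - xstar) i| := by
      rw [Real.dist_eq, Pi.sub_apply]
    rw [h1]
    exact le_trans (QN.abs_le_euclNorm _ i) (hbound m)
  exact squeeze_zero (fun m => dist_nonneg) hcoord hlim
end

section
/- Let R, G, K be real symmetric N×N matrices, P a diagonal real N×N matrix, and H a real N×N matrix. Suppose Q := H R Hᵀ + G is strictly positive definite, P + K is invertible and positive semidefinite, and set W_mse = (P + K)⁻¹ P R Hᵀ Q⁻¹. For a real N×N matrix W define F(W) = tr(Wᵀ (P + K) W Q) + tr(P R) − tr(H R P W) − tr(Wᵀ P R Hᵀ). Then for every real N×N matrix W, F(W) − F(W_mse) = tr((W − W_mse)ᵀ (P + K) (W − W_mse) Q) ≥ 0; in particular F(W) ≥ F(W_mse), with equality only if W = W_mse whenever P + K is strictly positive definite. -/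
open Matrix


lemma psd_diag_nonneg {n : ℕ} {S : Matrix (Fin n) (Fin n) ℝ} (hS : S.PosSemidef)
    (i : Fin n) : 0 ≤ S i i := by
  exact hS.diag_nonneg

lemma psd_trace_nonneg {n : ℕ} {S : Matrix (Fin n) (Fin n) ℝ} (hS : S.PosSemidef) :
    0 ≤ S.trace :=
  Finset.sum_nonneg fun i _ => psd_diag_nonneg hS i

lemma quad_diag {n : ℕ} (A M : Matrix (Fin n) (Fin n) ℝ) (j : Fin n) :
    (Mᵀ * A * M) j j = star (fun i => M i j) ⬝ᵥ (A *ᵥ fun i => M i j) := by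
  simp only [Matrix.mul_apply, Matrix.mulVec, dotProduct, Finset.sum_mul,
    Finset.mul_sum, star_trivial, transpose_apply]
  rw [Finset.sum_comm]
  exact Finset.sum_congr rfl fun x _ => Finset.sum_congr rfl fun i _ => by ring

lemma pd_sandwich_psd {n : ℕ} {A : Matrix (Fin n) (Fin n) ℝ} (hA : A.PosSemidef)
    (M : Matrix (Fin n) (Fin n) ℝ) : (Mᵀ * A * M).PosSemidef := by
  simpa [conjTranspose_eq_transpose_of_trivial] using hA.conjTranspose_mul_mul_same M

lemma trace_zero_of_pd {n : ℕ} {A M : Matrix (Fin n) (Fin n) ℝ} (hA : A.PosDef)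
    (h : (Mᵀ * A * M).trace = 0) : M = 0 := by
  have hpsd := pd_sandwich_psd hA.posSemidef M
  have hdiag : ∀ j, (Mᵀ * A * M) j j = 0 := fun j =>
    (Finset.sum_eq_zero_iff_of_nonneg
      (fun i _ => psd_diag_nonneg hpsd i)).mp h j (Finset.mem_univ j)
  ext i j
  have hcolz : (fun i => M i j) = 0 := by
    by_contra hne
    have := hA.dotProduct_mulVec_pos (x := fun i => M i j) (by simpa using hne)
    rw [← quad_diag A M j, hdiag j] at this
    exact lt_irrefl _ this
  simpa using congrFun hcolz i

/-- for the trace form of the stochastic mean squared error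
`F(W) = tr(Wᵀ(P+K)W Q) + tr(P R) − tr(H R P W) − tr(Wᵀ P R Hᵀ)` with
`Q = H R Hᵀ + G` strictly positive definite and `P + K` invertible positive
semidefinite, and `W_mse = (P+K)⁻¹ P R Hᵀ Q⁻¹`, one has
`F(W) − F(W_mse) = tr((W−W_mse)ᵀ(P+K)(W−W_mse)Q) ≥ 0`; in particular
`F(W) ≥ F(W_mse)`, with equality only if `W = W_mse` whenever `P + K` is
strictly positive definite. -/
theorem wiener_trace_form_optimality {N : ℕ}
    (R G K P H : Matrix (Fin N) (Fin N) ℝ)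
    (hR : R.IsSymm) (hG : G.IsSymm) (hK : K.IsSymm)
    (hPdiag : ∃ q : Fin N → ℝ, P = Matrix.diagonal q)
    (Q : Matrix (Fin N) (Fin N) ℝ) (hQdef : Q = H * R * Hᵀ + G)
    (hQ : Q.PosDef)
    (hPKinv : IsUnit (P + K).det) (hPKpsd : (P + K).PosSemidef)
    (Wmse : Matrix (Fin N) (Fin N) ℝ)
    (hW : Wmse = (P + K)⁻¹ * P * R * Hᵀ * Q⁻¹)
    (F : Matrix (Fin N) (Fin N) ℝ → ℝ)
    (hF : ∀ W, F W = Matrix.trace (Wᵀ * (P + K) * W * Q) + Matrix.trace (P * R)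
        - Matrix.trace (H * R * P * W) - Matrix.trace (Wᵀ * P * R * Hᵀ)) :
    ∀ W : Matrix (Fin N) (Fin N) ℝ,
      F W - F Wmse = Matrix.trace ((W - Wmse)ᵀ * (P + K) * (W - Wmse) * Q) ∧
      0 ≤ Matrix.trace ((W - Wmse)ᵀ * (P + K) * (W - Wmse) * Q) ∧
      F Wmse ≤ F W ∧
      ((P + K).PosDef → F W = F Wmse → W = Wmse) := by
  intro W
  obtain ⟨q, hq⟩ := hPdiag
  have hPsym : Pᵀ = P := by rw [hq]; exact Matrix.diagonal_transpose q
  have hQs : Qᵀ = Q := by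
    rw [hQdef]
    simp [transpose_add, transpose_mul, hR.eq, hG.eq, Matrix.mul_assoc]
  have hAs : (P + K)ᵀ = P + K := by rw [transpose_add, hPsym, hK.eq]
  have hQdet : IsUnit Q.det := hQ.det_pos.ne'.isUnit
  have key : (P + K) * Wmse * Q = P * R * Hᵀ := by
    rw [hW]
    have h1 : (P + K) * (P + K)⁻¹ = 1 := Matrix.mul_nonsing_inv _ hPKinv
    have h2 : Q⁻¹ * Q = 1 := Matrix.nonsing_inv_mul _ hQdet
    calc (P + K) * ((P + K)⁻¹ * P * R * Hᵀ * Q⁻¹) * Q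
        = ((P + K) * (P + K)⁻¹) * (P * R * Hᵀ) * (Q⁻¹ * Q) := by noncomm_ring
      _ = P * R * Hᵀ := by rw [h1, h2, one_mul, mul_one]
  have hc1 : ∀ V : Matrix (Fin N) (Fin N) ℝ,
      Matrix.trace (Vᵀ * (P + K) * Wmse * Q) = Matrix.trace (Vᵀ * P * R * Hᵀ) := by
    intro V
    rw [show Vᵀ * (P + K) * Wmse * Q = Vᵀ * ((P + K) * Wmse * Q) by noncomm_ring, key]
    rw [show Vᵀ * (P * R * Hᵀ) = Vᵀ * P * R * Hᵀ by noncomm_ring]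
  have hc2 : ∀ V : Matrix (Fin N) (Fin N) ℝ,
      Matrix.trace (Wmseᵀ * (P + K) * V * Q) = Matrix.trace (Vᵀ * P * R * Hᵀ) := by
    intro V
    rw [← Matrix.trace_transpose (Wmseᵀ * (P + K) * V * Q)]
    rw [show (Wmseᵀ * (P + K) * V * Q)ᵀ = Qᵀ * (Vᵀ * (P + K)ᵀ * Wmse) by
      simp [transpose_mul, Matrix.mul_assoc]]
    rw [hAs, hQs, Matrix.trace_mul_comm]
    exact hc1 V
  have hc3 : ∀ V : Matrix (Fin N) (Fin N) ℝ,
      Matrix.trace (H * R * P * V) = Matrix.trace (Vᵀ * P * R * Hᵀ) := by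
    intro V
    rw [← Matrix.trace_transpose (Vᵀ * P * R * Hᵀ)]
    congr 1
    rw [show (Vᵀ * P * R * Hᵀ)ᵀ = H * Rᵀ * Pᵀ * V by simp [transpose_mul, Matrix.mul_assoc],
      hR.eq, hPsym]
  have hexp : (W - Wmse)ᵀ * (P + K) * (W - Wmse) * Q =
      Wᵀ * (P + K) * W * Q - Wᵀ * (P + K) * Wmse * Q
        - (Wmseᵀ * (P + K) * W * Q - Wmseᵀ * (P + K) * Wmse * Q) := by
    simp only [transpose_sub]; noncomm_ring
  have htr : Matrix.trace ((W - Wmse)ᵀ * (P + K) * (W - Wmse) * Q) =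
      Matrix.trace (Wᵀ * (P + K) * W * Q) - Matrix.trace (Wᵀ * P * R * Hᵀ)
        - Matrix.trace (Wᵀ * P * R * Hᵀ) + Matrix.trace (Wmseᵀ * P * R * Hᵀ) := by
    rw [hexp, Matrix.trace_sub, Matrix.trace_sub, Matrix.trace_sub,
      hc1 W, hc2 W, hc1 Wmse]
    ring
  have part1 : F W - F Wmse =
      Matrix.trace ((W - Wmse)ᵀ * (P + K) * (W - Wmse) * Q) := by
    rw [hF W, hF Wmse, htr, hc3 W, hc3 Wmse, hc1 Wmse]
    ring
  obtain ⟨B, hB⟩ : ∃ B : Matrix (Fin N) (Fin N) ℝ, Q = Bᴴ * B := by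
    open scoped MatrixOrder in
    obtain ⟨B, hB⟩ := CStarAlgebra.nonneg_iff_eq_star_mul_self.mp hQ.posSemidef.nonneg
    exact ⟨B, hB⟩
  have hB' : Q = Bᵀ * B := by rw [hB, conjTranspose_eq_transpose_of_trivial]
  have htr2 : Matrix.trace ((W - Wmse)ᵀ * (P + K) * (W - Wmse) * Q) =
      Matrix.trace (((W - Wmse) * Bᵀ)ᵀ * (P + K) * ((W - Wmse) * Bᵀ)) := by
    rw [hB']
    rw [show (W - Wmse)ᵀ * (P + K) * (W - Wmse) * (Bᵀ * B)
        = ((W - Wmse)ᵀ * (P + K) * (W - Wmse) * Bᵀ) * B by noncomm_ring,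
      Matrix.trace_mul_comm]
    congr 1
    simp [transpose_mul, Matrix.mul_assoc]
  have part2 : 0 ≤ Matrix.trace ((W - Wmse)ᵀ * (P + K) * (W - Wmse) * Q) := by
    rw [htr2]
    exact psd_trace_nonneg (pd_sandwich_psd hPKpsd _)
  refine ⟨part1, part2, by linarith, ?_⟩
  intro hApd heq
  have h0 : Matrix.trace (((W - Wmse) * Bᵀ)ᵀ * (P + K) * ((W - Wmse) * Bᵀ)) = 0 := by
    rw [← htr2, ← part1, heq, sub_self]
  have hM0 : (W - Wmse) * Bᵀ = 0 := trace_zero_of_pd hApd h0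
  have hdetB : IsUnit Bᵀ.det := by
    have hdq : Bᵀ.det * B.det = Q.det := by rw [hB', Matrix.det_mul]
    refine isUnit_iff_ne_zero.mpr fun hz => ?_
    rw [hz, zero_mul] at hdq
    exact hQ.det_pos.ne' hdq.symm
  have hsub : W - Wmse = 0 := by
    have h1 : (W - Wmse) * (Bᵀ * (Bᵀ)⁻¹) = 0 := by
      rw [← Matrix.mul_assoc, hM0, Matrix.zero_mul]
    rwa [Matrix.mul_nonsing_inv _ hdetB, mul_one] at h1
  exact sub_eq_zero.mp hsub
end

section
/- Let H, R, G, K be real symmetric N×N matrices that pairwise commute, let P be a diagonal real N×N matrix, and assume A := H R Hᵀ + G and P + K are invertible. Set W_mse = (P + K)⁻¹ P R Hᵀ A⁻¹. Then I − W_mse H = (P + K)⁻¹ A⁻¹ R Hᵀ H K + A⁻¹ G. Consequently, for any vector v ∈ ℝ^N with K v = 0 and G v = 0, one has W_mse H v = v. -/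
/-!
Since `H` is symmetric and `H, R, G, K` commute pairwise, `A = H R H + G` commutes with
`H`, `G` and `K`, hence so does `A⁻¹`. Then `W H = (P + K)⁻¹ P (R H²) A⁻¹` with
`R H² = A - G`, so `I - W H = (P + K)⁻¹ (K + P A⁻¹ G)`; substituting `R H² = A - G` in the
right-hand side of the identity yields the same matrix. Applying the identity to a vector
killed by `K` and `G` gives `W H v = v`.
-/

open Matrix

namespace Matrix

variable {n 𝕜 : Type*} [Fintype n] [DecidableEq n] [CommRing 𝕜]

theorem commute_nonsing_inv_left {A B : Matrix n n 𝕜} (h : Commute A B) :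
    Commute A⁻¹ B := by
  by_cases hA : IsUnit A.det
  · obtain ⟨u, rfl⟩ := A.isUnit_iff_isUnit_det.mpr hA
    rw [← coe_units_inv]
    exact h.units_inv_left
  · rw [nonsing_inv_apply_not_isUnit _ hA]
    exact Commute.zero_left B

theorem one_sub_inv_mul_mul_one_sub {P K : Matrix n n 𝕜} (hPK : IsUnit (P + K).det)
    (X : Matrix n n 𝕜) : 1 - (P + K)⁻¹ * P * (1 - X) = (P + K)⁻¹ * (K + P * X) := by
  nth_rw 1 [← nonsing_inv_mul _ hPK]
  noncomm_ring

theorem one_sub_wiener_mul_eq {H R G K P A : Matrix n n 𝕜} (hH : H.IsSymm)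
    (hHR : Commute H R) (hHG : Commute H G) (hHK : Commute H K)
    (hRG : Commute R G) (hRK : Commute R K) (hGK : Commute G K)
    (hA : A = H * R * Hᵀ + G) (hAdet : IsUnit A.det) (hPK : IsUnit (P + K).det) :
    1 - (P + K)⁻¹ * P * R * Hᵀ * A⁻¹ * H = (P + K)⁻¹ * A⁻¹ * R * Hᵀ * H * K + A⁻¹ * G := by
  rw [hH.eq] at hA ⊢
  have commute_inv {X : Matrix n n 𝕜} (hH : Commute H X) (hR : Commute R X)
      (hG : Commute G X) : Commute A⁻¹ X :=
    commute_nonsing_inv_left (hA ▸ ((hH.mul_left hR).mul_left hH).add_left hG)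
  have hRHH : R * H * H = A - G := by rw [hA, add_sub_cancel_right, hHR.eq]
  have hAH := commute_inv (.refl H) hHR.symm hHG.symm
  have hAG := commute_inv hHG hRG (.refl G)
  have hAGK := (commute_inv hHK hRK hGK).mul_left hGK
  calc 1 - (P + K)⁻¹ * P * R * H * A⁻¹ * H
      = 1 - (P + K)⁻¹ * P * (R * H * H * A⁻¹) := by
        simp only [mul_assoc, hAH.eq]
    _ = (P + K)⁻¹ * (K + P * (A⁻¹ * G)) := by
        rw [hRHH, sub_mul, mul_nonsing_inv _ hAdet, ← hAG.eq, one_sub_inv_mul_mul_one_sub hPK]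
    _ = (P + K)⁻¹ * (A⁻¹ * (A - G) * K + (P + K) * (A⁻¹ * G)) := by
        rw [mul_sub, nonsing_inv_mul _ hAdet, sub_mul, one_mul, ← mul_assoc, hAGK.eq]
        noncomm_ring
    _ = (P + K)⁻¹ * A⁻¹ * R * H * H * K + A⁻¹ * G := by
        rw [← hRHH, mul_add, ← mul_assoc (P + K)⁻¹ (P + K), nonsing_inv_mul _ hPK, one_mul]
        simp only [mul_assoc]

theorem mulVec_eq_self_of_one_sub_eq {M B C K G : Matrix n n 𝕜} {v : n → 𝕜}
    (h : 1 - M = B * K + C * G) (hK : K *ᵥ v = 0) (hG : G *ᵥ v = 0) : M *ᵥ v = v := by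
  have hv : (1 - M) *ᵥ v = 0 := by
    rw [h, add_mulVec, ← mulVec_mulVec, ← mulVec_mulVec, hK, hG, mulVec_zero, mulVec_zero,
      add_zero]
  rwa [sub_mulVec, one_mulVec, sub_eq_zero, eq_comm] at hv

end Matrix

theorem wiener_bias_identity_general {N : ℕ}
    (H R G K : Matrix (Fin N) (Fin N) ℝ)
    (hHs : H.IsSymm)
    (hHR : H * R = R * H) (hHG : H * G = G * H) (hHK : H * K = K * H)
    (hRG : R * G = G * R) (hRK : R * K = K * R) (hGK : G * K = K * G)
    (P : Matrix (Fin N) (Fin N) ℝ)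
    (A : Matrix (Fin N) (Fin N) ℝ) (hA : A = H * R * Hᵀ + G)
    (hAinv : IsUnit A.det) (hPKinv : IsUnit (P + K).det)
    (Wmse : Matrix (Fin N) (Fin N) ℝ)
    (hW : Wmse = (P + K)⁻¹ * P * R * Hᵀ * A⁻¹) :
    (1 - Wmse * H = (P + K)⁻¹ * A⁻¹ * R * Hᵀ * H * K + A⁻¹ * G) ∧
      ∀ v : Fin N → ℝ, K.mulVec v = 0 → G.mulVec v = 0 →
        (Wmse * H).mulVec v = v := by
  have bias : 1 - Wmse * H = (P + K)⁻¹ * A⁻¹ * R * Hᵀ * H * K + A⁻¹ * G := by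
    rw [hW]
    exact one_sub_wiener_mul_eq hHs hHR hHG hHK hRG hRK hGK hA hAinv hPKinv
  exact ⟨bias, fun v hK hG => mulVec_eq_self_of_one_sub_eq bias hK hG⟩

/-- for symmetric pairwise commuting `H, R, G, K`, diagonal `P`,
with `A = H R Hᵀ + G` and `P + K` invertible, the stochastic Wiener filter
`W_mse = (P+K)⁻¹ P R Hᵀ A⁻¹` satisfies the bias identity
`I − W_mse H = (P+K)⁻¹ A⁻¹ R Hᵀ H K + A⁻¹ G`; consequently `W_mse H v = v`
whenever `K v = 0` and `G v = 0`. -/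
theorem wiener_bias_identity {N : ℕ}
    (H R G K : Matrix (Fin N) (Fin N) ℝ)
    (hHs : H.IsSymm) (hRs : R.IsSymm) (hGs : G.IsSymm) (hKs : K.IsSymm)
    (hHR : H * R = R * H) (hHG : H * G = G * H) (hHK : H * K = K * H)
    (hRG : R * G = G * R) (hRK : R * K = K * R) (hGK : G * K = K * G)
    (p : Fin N → ℝ)
    (P : Matrix (Fin N) (Fin N) ℝ) (hP : P = Matrix.diagonal p)
    (A : Matrix (Fin N) (Fin N) ℝ) (hA : A = H * R * Hᵀ + G)
    (hAinv : IsUnit A.det) (hPKinv : IsUnit (P + K).det)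
    (Wmse : Matrix (Fin N) (Fin N) ℝ)
    (hW : Wmse = (P + K)⁻¹ * P * R * Hᵀ * A⁻¹) :
    (1 - Wmse * H = (P + K)⁻¹ * A⁻¹ * R * Hᵀ * H * K + A⁻¹ * G) ∧
      ∀ v : Fin N → ℝ, K.mulVec v = 0 → G.mulVec v = 0 →
        (Wmse * H).mulVec v = v :=
  wiener_bias_identity_general H R G K hHs hHR hHG hHK hRG hRK hGK P A hA hAinv hPKinv Wmse hW
end

section
/- Let (Ω, 𝔉, ℙ) be a probability space and let x, ε : Ω → ℝ^N be random vectors all of whose entries are square integrable. Let H, R̃, G, K be real symmetric N×N matrices that pairwise commute and let P be a diagonal N×N matrix with nonnegative diagonal entries. Assume: E[x] = c·1 for some real c ≠ 0, E[(x − E x)(x − E x)ᵀ] = R̃, E[ε] = 0, E[ε xᵀ] = 0, E[ε εᵀ] = G; H 1 = τ·1 for some real τ ≠ 0; G 1 = 0 and K 1 = 0; and H R̃ Hᵀ + G and P + K are strictly positive definite. Set y = H x + ε and, for a real N×N matrix W, define F(W) = E[(W y − x)ᵀ P (W y − x)] + E[yᵀ Wᵀ K W y]. Let W̃_mse = (P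 + K)⁻¹ P R̃ Hᵀ (H R̃ Hᵀ + G)⁻¹. Then F(W) ≥ F(W̃_mse) for every real N×N matrix W satisfying W H 1 = 1; moreover W̃_mse H 1 = 1, so that E[W̃_mse y] = E[x], i.e., W̃_mse y is an unbiased estimator of x. -/
open Matrix MeasureTheory

section Helpers
set_option linter.unusedSectionVars false

variable {N : ℕ} {Ω : Type*} [MeasureSpace Ω] [IsProbabilityMeasure (volume : Measure Ω)]

lemma l2mul {f g : Ω → ℝ} (hf : MemLp f 2 volume) (hg : MemLp g 2 volume) :
    Integrable (fun ω => f ω * g ω) volume := by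
  have h : MemLp (f • g) 1 volume := hg.smul hf (hpqr := ⟨by
    rw [inv_one]
    exact ENNReal.inv_two_add_inv_two⟩)
  exact memLp_one_iff_integrable.mp h

lemma memlp_mulVec {u : Ω → Fin N → ℝ} (hu : ∀ i, MemLp (fun ω => u ω i) 2 volume)
    (M : Matrix (Fin N) (Fin N) ℝ) (i : Fin N) :
    MemLp (fun ω => M.mulVec (u ω) i) 2 volume := by
  simp only [Matrix.mulVec, dotProduct]
  exact memLp_finset_sum _ (fun j _ => (hu j).const_mul (M i j))

lemma dot_expand (u v : Fin N → ℝ) (B : Matrix (Fin N) (Fin N) ℝ) :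
    u ⬝ᵥ B.mulVec v = ∑ i, ∑ j, B i j * (u i * v j) := by
  simp only [dotProduct, Matrix.mulVec, Finset.mul_sum]
  exact Finset.sum_congr rfl fun i _ => Finset.sum_congr rfl fun j _ => by ring

lemma integrable_dot {u v : Ω → Fin N → ℝ} (hu : ∀ i, MemLp (fun ω => u ω i) 2 volume)
    (hv : ∀ i, MemLp (fun ω => v ω i) 2 volume) (B : Matrix (Fin N) (Fin N) ℝ) :
    Integrable (fun ω => u ω ⬝ᵥ B.mulVec (v ω)) volume := by
  simp only [dot_expand]
  exact integrable_finset_sum _ fun i _ => integrable_finset_sum _ fun j _ =>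
    ((l2mul (hu i) (hv j)).const_mul (B i j))

lemma integral_dot {u v : Ω → Fin N → ℝ} (hu : ∀ i, MemLp (fun ω => u ω i) 2 volume)
    (hv : ∀ i, MemLp (fun ω => v ω i) 2 volume) (B : Matrix (Fin N) (Fin N) ℝ) :
    ∫ ω, u ω ⬝ᵥ B.mulVec (v ω) = ∑ i, ∑ j, B i j * ∫ ω, u ω i * v ω j := by
  simp only [dot_expand]
  rw [integral_finset_sum _ fun i _ => integrable_finset_sum _ fun j _ =>
      ((l2mul (hu i) (hv j)).const_mul (B i j))]
  refine Finset.sum_congr rfl fun i _ => ?_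
  rw [integral_finset_sum _ fun j _ => ((l2mul (hu i) (hv j)).const_mul (B i j))]
  exact Finset.sum_congr rfl fun j _ => integral_const_mul _ _

lemma sum_eq_trace (B m : Matrix (Fin N) (Fin N) ℝ) (hm : m.IsSymm) :
    ∑ i, ∑ j, B i j * m i j = Matrix.trace (B * m) := by
  simp only [Matrix.trace, Matrix.diag, Matrix.mul_apply]
  exact Finset.sum_congr rfl fun i _ => Finset.sum_congr rfl fun j _ => by rw [hm.apply]

lemma mulVec_dot (M B M' : Matrix (Fin N) (Fin N) ℝ) (s t : Fin N → ℝ) :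
    (M.mulVec s) ⬝ᵥ B.mulVec (M'.mulVec t) = s ⬝ᵥ (Mᵀ * B * M').mulVec t := by
  rw [Matrix.mulVec_mulVec, dotProduct_mulVec, Matrix.vecMul_mulVec,
    dotProduct_mulVec, Matrix.mul_assoc]

lemma commute_inv {n : Type*} [Fintype n] [DecidableEq n] {A B : Matrix n n ℝ}
    (h : IsUnit A) (hc : B * A = A * B) : B * A⁻¹ = A⁻¹ * B := by
  have hd : IsUnit A.det := (Matrix.isUnit_iff_isUnit_det A).mp h
  calc B * A⁻¹ = A⁻¹ * (A * (B * A⁻¹)) := by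
        rw [← Matrix.mul_assoc, Matrix.nonsing_inv_mul A hd, Matrix.one_mul]
    _ = A⁻¹ * (A * B * A⁻¹) := by rw [Matrix.mul_assoc]
    _ = A⁻¹ * (B * (A * A⁻¹)) := by rw [← hc, Matrix.mul_assoc]
    _ = A⁻¹ * B := by rw [Matrix.mul_nonsing_inv A hd, Matrix.mul_one]

end Helpers

/-- for a wide-band stationary input `x` (`E x = c·1`,
covariance `R̃`), observation `y = Hx + ε` with noise of mean zero and
covariance `G`, where `H, R̃, G, K` are symmetric pairwise commuting,
`H 1 = τ·1` with `τ ≠ 0`, `G 1 = K 1 = 0`, `H R̃ Hᵀ + G` and `P + K` strictly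
positive definite, the filter `W̃_mse = (P+K)⁻¹ P R̃ Hᵀ (H R̃ Hᵀ + G)⁻¹`
minimizes the stochastic mean squared error among all unbiased filters
(`W H 1 = 1`), is itself unbiased (`W̃_mse H 1 = 1`), and `W̃_mse y` is an
unbiased estimator of `x`. -/
theorem wideband_wiener_filter_optimal {N : ℕ} {Ω : Type*} [MeasureSpace Ω]
    [IsProbabilityMeasure (volume : Measure Ω)]
    (x ε : Ω → Fin N → ℝ)
    (hxL2 : ∀ i, MemLp (fun ω => x ω i) 2 volume)
    (hεL2 : ∀ i, MemLp (fun ω => ε ω i) 2 volume)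
    (H Rt G K : Matrix (Fin N) (Fin N) ℝ)
    (hHs : H.IsSymm) (hRs : Rt.IsSymm) (hGs : G.IsSymm) (hKs : K.IsSymm)
    (hHR : H * Rt = Rt * H) (hHG : H * G = G * H) (hHK : H * K = K * H)
    (hRG : Rt * G = G * Rt) (hRK : Rt * K = K * Rt) (hGK : G * K = K * G)
    (p : Fin N → ℝ) (hp : ∀ i, 0 ≤ p i)
    (P : Matrix (Fin N) (Fin N) ℝ) (hP : P = Matrix.diagonal p)
    (c : ℝ) (hc : c ≠ 0)
    (hxmean : ∀ i, ∫ ω, x ω i = c)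
    (hcov : ∀ i j, ∫ ω, (x ω i - c) * (x ω j - c) = Rt i j)
    (hεmean : ∀ i, ∫ ω, ε ω i = 0)
    (hεx : ∀ i j, ∫ ω, ε ω i * x ω j = 0)
    (hGcov : ∀ i j, ∫ ω, ε ω i * ε ω j = G i j)
    (τ : ℝ) (hτ : τ ≠ 0)
    (hH1 : H.mulVec (fun _ => 1) = τ • (fun _ => (1 : ℝ)))
    (hG1 : G.mulVec (fun _ => 1) = 0) (hK1 : K.mulVec (fun _ => 1) = 0)
    (hA : (H * Rt * Hᵀ + G).PosDef) (hPK : (P + K).PosDef)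
    (y : Ω → Fin N → ℝ) (hy : ∀ ω, y ω = H.mulVec (x ω) + ε ω)
    (F : Matrix (Fin N) (Fin N) ℝ → ℝ)
    (hF : ∀ W, F W
      = (∫ ω, (W.mulVec (y ω) - x ω) ⬝ᵥ P.mulVec (W.mulVec (y ω) - x ω))
        + ∫ ω, (y ω) ⬝ᵥ (Wᵀ * K * W).mulVec (y ω))
    (Wt : Matrix (Fin N) (Fin N) ℝ)
    (hWt : Wt = (P + K)⁻¹ * P * Rt * Hᵀ * (H * Rt * Hᵀ + G)⁻¹) :
    (∀ W : Matrix (Fin N) (Fin N) ℝ,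
        W.mulVec (H.mulVec (fun _ => 1)) = (fun _ => 1) → F Wt ≤ F W) ∧
      Wt.mulVec (H.mulVec (fun _ => 1)) = (fun _ => 1) ∧
      ∀ i, ∫ ω, (Wt.mulVec (y ω)) i = c := by
  classical
  have hHt : Hᵀ = H := hHs
  rw [hHt] at hA hWt
  set e : Fin N → ℝ := fun _ => 1 with he
  set J : Matrix (Fin N) (Fin N) ℝ := Matrix.of (fun _ _ => (1 : ℝ)) with hJ
  set R' : Matrix (Fin N) (Fin N) ℝ := Rt + (c ^ 2) • J with hR'
  set A : Matrix (Fin N) (Fin N) ℝ := H * Rt * H + G with hAdef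
  set Q : Matrix (Fin N) (Fin N) ℝ := P + K with hQdef
  set S' : Matrix (Fin N) (Fin N) ℝ := H * R' * H + G with hS'def
  have hPs : Pᵀ = P := by rw [hP]; exact Matrix.diagonal_transpose p
  have hJs : Jᵀ = J := by ext i j; simp [hJ]
  have hR's : R'.IsSymm := by
    unfold Matrix.IsSymm
    rw [hR', Matrix.transpose_add, Matrix.transpose_smul, hJs, hRs]
  have hQs : Qᵀ = Q := by rw [hQdef, Matrix.transpose_add, hPs, hKs]
  have hS's : S'.IsSymm := by
    unfold Matrix.IsSymm
    rw [hS'def, Matrix.transpose_add, Matrix.transpose_mul, Matrix.transpose_mul, hHt,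
      hR's.eq, hGs.eq, Matrix.mul_assoc]
  -- moments
  have hxi : ∀ i, Integrable (fun ω => x ω i) volume := fun i => (hxL2 i).integrable one_le_two
  have hεi : ∀ i, Integrable (fun ω => ε ω i) volume := fun i => (hεL2 i).integrable one_le_two
  have hmxx : ∀ i j, ∫ ω, x ω i * x ω j = R' i j := by
    intro i j
    have heq : (fun ω => (x ω i - c) * (x ω j - c))
        = fun ω => x ω i * x ω j - (c * x ω i + c * x ω j - c * c) := by
      funext ω; ring
    have ha : Integrable (fun ω => c * x ω i) volume := (hxi i).const_mul c
    have hb : Integrable (fun ω => c * x ω j) volume := (hxi j).const_mul c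
    have hab : Integrable (fun ω => c * x ω i + c * x ω j) volume := ha.add hb
    have h2 : Integrable (fun ω => c * x ω i + c * x ω j - c * c) volume :=
      hab.sub (integrable_const _)
    have h1 : Integrable (fun ω => x ω i * x ω j) volume := l2mul (hxL2 i) (hxL2 j)
    have h0 := hcov i j
    rw [heq, integral_sub h1 h2, integral_sub hab (integrable_const _),
      integral_add ha hb, integral_const_mul, integral_const_mul, hxmean i, hxmean j,
      integral_const] at h0
    simp only [measure_univ, probReal_univ, ENNReal.toReal_one, smul_eq_mul, one_mul] at h0
    have : ∫ ω, x ω i * x ω j = Rt i j + c ^ 2 := by linarith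
    rw [this, hR']
    simp [hJ, Matrix.add_apply, Matrix.smul_apply]
  have hmxε : ∀ i j, ∫ ω, x ω i * ε ω j = 0 := by
    intro i j
    have heq : (fun ω => x ω i * ε ω j) = fun ω => ε ω j * x ω i := funext fun ω => mul_comm _ _
    rw [heq]; exact hεx j i
  -- quadratic form evaluation
  have quad : ∀ (U V B : Matrix (Fin N) (Fin N) ℝ),
      (∫ ω, (U.mulVec (x ω) + V.mulVec (ε ω)) ⬝ᵥ
          B.mulVec (U.mulVec (x ω) + V.mulVec (ε ω)))
        = Matrix.trace (Uᵀ * B * U * R') + Matrix.trace (Vᵀ * B * V * G) := by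
    intro U V B
    have hpt : ∀ ω, (U.mulVec (x ω) + V.mulVec (ε ω)) ⬝ᵥ
          B.mulVec (U.mulVec (x ω) + V.mulVec (ε ω))
        = (x ω ⬝ᵥ (Uᵀ * B * U).mulVec (x ω) + x ω ⬝ᵥ (Uᵀ * B * V).mulVec (ε ω))
          + (ε ω ⬝ᵥ (Vᵀ * B * U).mulVec (x ω) + ε ω ⬝ᵥ (Vᵀ * B * V).mulVec (ε ω)) := by
      intro ω
      rw [Matrix.mulVec_add, dotProduct_add, add_dotProduct,
        add_dotProduct, mulVec_dot, mulVec_dot, mulVec_dot, mulVec_dot]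
      ring
    simp only [hpt]
    have i1 : Integrable (fun ω => x ω ⬝ᵥ (Uᵀ * B * U).mulVec (x ω)
        + x ω ⬝ᵥ (Uᵀ * B * V).mulVec (ε ω)) volume :=
      (integrable_dot hxL2 hxL2 _).add (integrable_dot hxL2 hεL2 _)
    have i2 : Integrable (fun ω => ε ω ⬝ᵥ (Vᵀ * B * U).mulVec (x ω)
        + ε ω ⬝ᵥ (Vᵀ * B * V).mulVec (ε ω)) volume :=
      (integrable_dot hεL2 hxL2 _).add (integrable_dot hεL2 hεL2 _)
    rw [integral_add i1 i2,
      integral_add (integrable_dot hxL2 hxL2 _) (integrable_dot hxL2 hεL2 _),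
      integral_add (integrable_dot hεL2 hxL2 _) (integrable_dot hεL2 hεL2 _),
      integral_dot hxL2 hxL2, integral_dot hxL2 hεL2, integral_dot hεL2 hxL2,
      integral_dot hεL2 hεL2]
    simp only [hmxx, hmxε, hεx, hGcov, mul_zero, Finset.sum_const_zero, add_zero, zero_add]
    rw [sum_eq_trace _ _ hR's, sum_eq_trace _ _ hGs]
  -- evaluation of F
  have hFeval : ∀ W, F W = Matrix.trace (Wᵀ * Q * W * S')
      - 2 * Matrix.trace (P * W * (H * R')) + Matrix.trace (P * R') := by
    intro W
    rw [hF W]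
    have h1 : (fun ω => (W.mulVec (y ω) - x ω) ⬝ᵥ P.mulVec (W.mulVec (y ω) - x ω))
        = fun ω => ((W * H - 1).mulVec (x ω) + W.mulVec (ε ω)) ⬝ᵥ
            P.mulVec ((W * H - 1).mulVec (x ω) + W.mulVec (ε ω)) := by
      funext ω
      have hv : W.mulVec (y ω) - x ω = (W * H - 1).mulVec (x ω) + W.mulVec (ε ω) := by
        rw [hy ω, Matrix.mulVec_add, Matrix.mulVec_mulVec, Matrix.sub_mulVec,
          Matrix.one_mulVec]
        abel
      rw [hv]
    have h2 : (fun ω => (y ω) ⬝ᵥ (Wᵀ * K * W).mulVec (y ω))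
        = fun ω => (H.mulVec (x ω) + (1 : Matrix (Fin N) (Fin N) ℝ).mulVec (ε ω)) ⬝ᵥ
            (Wᵀ * K * W).mulVec
              (H.mulVec (x ω) + (1 : Matrix (Fin N) (Fin N) ℝ).mulVec (ε ω)) := by
      funext ω; rw [hy ω, Matrix.one_mulVec]
    rw [h1, h2, quad (W * H - 1) W P, quad H 1 (Wᵀ * K * W)]
    simp only [Matrix.transpose_sub, Matrix.transpose_mul, Matrix.transpose_one, hHt,
      hQdef, hS'def, Matrix.sub_mul, Matrix.mul_sub, Matrix.add_mul, Matrix.mul_add,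
      Matrix.one_mul, Matrix.mul_one, Matrix.trace_sub, Matrix.trace_add, Matrix.mul_assoc]
    have ea : (H * (Wᵀ * (P * (W * (H * R'))))).trace
        = (Wᵀ * (P * (W * (H * (R' * H))))).trace := by
      rw [Matrix.trace_mul_comm]; simp only [Matrix.mul_assoc]
    have eb : (H * (Wᵀ * (K * (W * (H * R'))))).trace
        = (Wᵀ * (K * (W * (H * (R' * H))))).trace := by
      rw [Matrix.trace_mul_comm]; simp only [Matrix.mul_assoc]
    have ec : (H * (Wᵀ * (P * R'))).trace = (P * (W * (H * R'))).trace := by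
      conv_lhs => rw [← Matrix.trace_transpose]
      simp only [Matrix.transpose_mul, Matrix.transpose_transpose, hHt, hPs, hR's.eq,
        Matrix.mul_assoc]
      rw [Matrix.trace_mul_comm]
      simp only [Matrix.mul_assoc]
    linarith [ea, eb, ec]
  -- algebra : invertibility
  have hAu : IsUnit A.det := (Matrix.isUnit_iff_isUnit_det A).mp hA.isUnit
  have hQu : IsUnit Q.det := (Matrix.isUnit_iff_isUnit_det Q).mp hPK.isUnit
  -- basic J identities
  have hHJ : H * J = τ • J := by
    ext i j
    have h := congrFun hH1 i
    simp only [Matrix.mulVec, dotProduct, he, mul_one, Pi.smul_apply,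
      smul_eq_mul] at h
    simp [Matrix.mul_apply, hJ, h]
  have hJH : J * H = τ • J := by
    ext i j
    have h := congrFun hH1 j
    simp only [Matrix.mulVec, dotProduct, he, mul_one, Pi.smul_apply,
      smul_eq_mul] at h
    simp only [Matrix.mul_apply, hJ, Matrix.smul_apply, Matrix.of_apply, one_mul,
      smul_eq_mul, mul_one]
    rw [← h]
    exact Finset.sum_congr rfl fun k _ => (hHs.apply k j).symm
  have hGJ : G * J = 0 := by
    ext i j
    have h := congrFun hG1 i
    simp only [Matrix.mulVec, dotProduct, he, mul_one, Pi.zero_apply] at h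
    simp [Matrix.mul_apply, hJ, h]
  have hHJH : H * (J * H) = (τ * τ) • J := by
    rw [hJH, Matrix.mul_smul, hHJ, smul_smul]
  have hS'A : S' = A + (c ^ 2 * (τ * τ)) • J := by
    rw [hS'def, hAdef, hR', Matrix.mul_add, Matrix.add_mul, Matrix.mul_smul,
      Matrix.smul_mul, Matrix.mul_assoc, Matrix.mul_assoc H J H, hHJH, smul_smul]
    abel
  -- commutation with A and its inverse
  have cHR : Commute H Rt := hHR
  have cHG : Commute H G := hHG
  have cRG : Commute Rt G := hRG
  have cRtA : Commute Rt A := by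
    rw [hAdef]
    exact ((cHR.symm.mul_right (Commute.refl Rt)).mul_right cHR.symm).add_right cRG
  have cHA : Commute H A := by
    rw [hAdef]
    exact (((Commute.refl H).mul_right cHR).mul_right (Commute.refl H)).add_right cHG
  have hRtAinv : Rt * A⁻¹ = A⁻¹ * Rt := commute_inv hA.isUnit cRtA.eq
  have hHAinv : H * A⁻¹ = A⁻¹ * H := commute_inv hA.isUnit cHA.eq
  have hAJ : A * J = (τ * τ) • (Rt * J) := by
    rw [hAdef, Matrix.add_mul, hGJ, add_zero, Matrix.mul_assoc (H * Rt) H J, hHJ,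
      Matrix.mul_smul, hHR, Matrix.mul_assoc Rt H J, hHJ, Matrix.mul_smul, smul_smul]
  have hAinvRtJ : A⁻¹ * (Rt * J) = (τ * τ)⁻¹ • J := by
    have hRtJ : Rt * J = (τ * τ)⁻¹ • (A * J) := by
      rw [hAJ, smul_smul, inv_mul_cancel₀ (mul_ne_zero hτ hτ), one_smul]
    rw [hRtJ, Matrix.mul_smul, ← Matrix.mul_assoc, Matrix.nonsing_inv_mul A hAu,
      Matrix.one_mul]
  -- key matrix identity
  have hQWt : Q * Wt = P * Rt * H * A⁻¹ := by
    rw [hWt]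
    simp only [← Matrix.mul_assoc]
    rw [Matrix.mul_nonsing_inv Q hQu, Matrix.one_mul]
  have keymat : Q * Wt * S' = P * R' * H := by
    rw [hQWt, hS'A, Matrix.mul_add, Matrix.mul_smul]
    have t1 : P * Rt * H * A⁻¹ * A = P * Rt * H := by
      rw [Matrix.mul_assoc, Matrix.nonsing_inv_mul A hAu, Matrix.mul_one]
    have t2 : P * Rt * H * A⁻¹ * J = τ⁻¹ • (P * J) := by
      rw [Matrix.mul_assoc (P * Rt) H A⁻¹, hHAinv, ← Matrix.mul_assoc (P * Rt) A⁻¹ H,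
        Matrix.mul_assoc (P * Rt * A⁻¹) H J, hHJ, Matrix.mul_smul,
        Matrix.mul_assoc P Rt A⁻¹, hRtAinv, Matrix.mul_assoc P (A⁻¹ * Rt) J,
        Matrix.mul_assoc A⁻¹ Rt J, hAinvRtJ, Matrix.mul_smul, smul_smul]
      congr 1
      field_simp
    rw [t1, t2, smul_smul]
    have hRH' : P * R' * H = P * Rt * H + (c ^ 2 * τ) • (P * J) := by
      rw [hR', Matrix.mul_add, Matrix.add_mul, Matrix.mul_smul, Matrix.smul_mul,
        Matrix.mul_assoc P J H, hJH, Matrix.mul_smul, smul_smul]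
    rw [hRH']
    congr 1
    congr 1
    field_simp
  -- difference identity
  have hcross : ∀ V : Matrix (Fin N) (Fin N) ℝ,
      (Vᵀ * Q * Wt * S').trace = (P * V * (H * R')).trace := by
    intro V
    have h1 : Vᵀ * Q * Wt * S' = Vᵀ * (Q * Wt * S') := by simp only [Matrix.mul_assoc]
    rw [h1, keymat]
    conv_lhs => rw [← Matrix.trace_transpose]
    simp only [Matrix.transpose_mul, Matrix.transpose_transpose, hHt, hPs, hR's.eq,
      Matrix.mul_assoc]
    rw [Matrix.trace_mul_comm]
    simp only [Matrix.mul_assoc]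
    rw [Matrix.trace_mul_comm]
    simp only [Matrix.mul_assoc]
  have hswap : ∀ V : Matrix (Fin N) (Fin N) ℝ,
      (Wtᵀ * Q * V * S').trace = (Vᵀ * Q * Wt * S').trace := by
    intro V
    conv_lhs => rw [← Matrix.trace_transpose]
    simp only [Matrix.transpose_mul, Matrix.transpose_transpose, hQs, hS's.eq,
      Matrix.mul_assoc]
    rw [Matrix.trace_mul_comm]
    simp only [Matrix.mul_assoc]
  have hdiff : ∀ W, F W = F Wt + Matrix.trace ((W - Wt)ᵀ * Q * (W - Wt) * S') := by
    intro W
    have hexp : ((W - Wt)ᵀ * Q * (W - Wt) * S').trace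
        = (Wᵀ * Q * W * S').trace - (Wᵀ * Q * Wt * S').trace
          - (Wtᵀ * Q * W * S').trace + (Wtᵀ * Q * Wt * S').trace := by
      simp only [Matrix.transpose_sub, Matrix.sub_mul, Matrix.mul_sub, Matrix.trace_sub]
      ring
    rw [hFeval W, hFeval Wt, hexp, hswap W, hcross W, hcross Wt]
    ring
  -- nonnegativity of the trace term
  have htr : ∀ D : Matrix (Fin N) (Fin N) ℝ, 0 ≤ Matrix.trace (Dᵀ * Q * D * S') := by
    intro D
    have hQpsd := hPK.posSemidef
    have hS'psd : S'.PosSemidef := by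
      rw [hS'A]
      refine (hA.add_posSemidef ?_).posSemidef
      refine Matrix.PosSemidef.of_dotProduct_mulVec_nonneg ?_ fun v => ?_
      · ext i j
        simp [hJ, Matrix.conjTranspose_apply]
      · have hv : star v ⬝ᵥ ((c ^ 2 * (τ * τ)) • J).mulVec v
            = (c ^ 2 * (τ * τ)) * ((∑ k, v k) * (∑ k, v k)) := by
          simp only [Matrix.mulVec, dotProduct, Matrix.smul_apply, hJ,
            Matrix.of_apply, smul_eq_mul, mul_one, Pi.star_apply, star_trivial]
          rw [← Finset.sum_mul, ← Finset.mul_sum]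
          ring
        rw [hv]
        have h1 : (0:ℝ) ≤ c ^ 2 * (τ * τ) := by nlinarith [sq_nonneg c, sq_nonneg τ]
        exact mul_nonneg h1 (mul_self_nonneg _)
    obtain ⟨Bm, hBm⟩ : ∃ B : Matrix (Fin N) (Fin N) ℝ, S' = Bᴴ * B := by
      open scoped MatrixOrder in exact CStarAlgebra.nonneg_iff_eq_star_mul_self.mp hS'psd.nonneg
    have hBt : S' = Bmᵀ * Bm := by
      rw [hBm, Matrix.conjTranspose_eq_transpose_of_trivial]
    have htr1 : (Dᵀ * Q * D * S').trace = ((D * Bmᵀ)ᵀ * (Q * (D * Bmᵀ))).trace := by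
      have e1 : Dᵀ * Q * D * (Bmᵀ * Bm) = (Dᵀ * (Q * (D * Bmᵀ))) * Bm := by
        simp only [Matrix.mul_assoc]
      rw [hBt, e1, Matrix.trace_mul_comm]
      have e2 : Bm * (Dᵀ * (Q * (D * Bmᵀ))) = (D * Bmᵀ)ᵀ * (Q * (D * Bmᵀ)) := by
        simp only [Matrix.transpose_mul, Matrix.transpose_transpose, Matrix.mul_assoc]
      rw [e2]
    rw [htr1]
    have hdiag : ∀ i, ((D * Bmᵀ)ᵀ * (Q * (D * Bmᵀ))) i i
        = star (fun k => (D * Bmᵀ) k i) ⬝ᵥ Q.mulVec (fun k => (D * Bmᵀ) k i) := by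
      intro i
      simp only [Matrix.mul_apply, Matrix.mulVec, dotProduct,
        Matrix.transpose_apply, star_trivial, Pi.star_apply]
    simp only [Matrix.trace, Matrix.diag]
    exact Finset.sum_nonneg fun i _ => by rw [hdiag i]; exact hQpsd.dotProduct_mulVec_nonneg _
  -- unbiasedness of Wt
  have hAe : A.mulVec e = (τ * τ) • Rt.mulVec e := by
    rw [hAdef, Matrix.add_mulVec, hG1, add_zero, ← Matrix.mulVec_mulVec, hH1,
      Matrix.mulVec_smul, hHR, ← Matrix.mulVec_mulVec, hH1, Matrix.mulVec_smul, smul_smul]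
  have hRAinve : Rt.mulVec (A⁻¹.mulVec e) = (τ * τ)⁻¹ • e := by
    have h1 : Rt.mulVec e = (τ * τ)⁻¹ • A.mulVec e := by
      rw [hAe, smul_smul, inv_mul_cancel₀ (mul_ne_zero hτ hτ), one_smul]
    rw [Matrix.mulVec_mulVec, hRtAinv, ← Matrix.mulVec_mulVec, h1, Matrix.mulVec_smul,
      Matrix.mulVec_mulVec, Matrix.nonsing_inv_mul A hAu, Matrix.one_mulVec]
  have hWte : Wt.mulVec e = τ⁻¹ • e := by
    rw [hWt]
    rw [show Q⁻¹ * P * Rt * H * A⁻¹ = Q⁻¹ * (P * (Rt * (H * A⁻¹))) from by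
      simp only [Matrix.mul_assoc]]
    rw [← Matrix.mulVec_mulVec, ← Matrix.mulVec_mulVec, ← Matrix.mulVec_mulVec, hHAinv,
      ← Matrix.mulVec_mulVec, hH1, Matrix.mulVec_smul, Matrix.mulVec_smul, hRAinve,
      smul_smul]
    have hτ3 : τ * (τ * τ)⁻¹ = τ⁻¹ := by field_simp
    rw [hτ3]
    have hPe : P.mulVec e = Q.mulVec e := by
      rw [hQdef, Matrix.add_mulVec, hK1, add_zero]
    rw [Matrix.mulVec_smul, hPe, Matrix.mulVec_smul, Matrix.mulVec_mulVec,
      Matrix.nonsing_inv_mul Q hQu, Matrix.one_mulVec]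
  have hunb : Wt.mulVec (H.mulVec e) = e := by
    rw [hH1]
    show Wt.mulVec (τ • e) = e
    rw [Matrix.mulVec_smul, hWte, smul_smul, mul_inv_cancel₀ hτ, one_smul]
  refine ⟨fun W _ => ?_, hunb, ?_⟩
  · have := htr (W - Wt)
    rw [hdiff W]; linarith
  · intro i
    have hyL2 : ∀ j, MemLp (fun ω => y ω j) 2 volume := by
      intro j
      have hfun : (fun ω => y ω j) = fun ω => H.mulVec (x ω) j + ε ω j := by
        funext ω; rw [hy ω]; rfl
      rw [hfun]
      exact (memlp_mulVec hxL2 H j).add (hεL2 j)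
    have hyint : ∀ j, Integrable (fun ω => y ω j) volume :=
      fun j => (hyL2 j).integrable one_le_two
    have hHrow : ∀ j, ∑ k, H j k = τ := by
      intro j
      have h := congrFun hH1 j
      simpa [Matrix.mulVec, dotProduct, he] using h
    have hymean : ∀ j, ∫ ω, y ω j = c * τ := by
      intro j
      have hfun : (fun ω => y ω j) = fun ω => (∑ k, H j k * x ω k) + ε ω j := by
        funext ω; rw [hy ω]; rfl
      rw [hfun, integral_add (integrable_finset_sum _ fun k _ => (hxi k).const_mul _)
        (hεi j), integral_finset_sum _ (fun k _ => (hxi k).const_mul _), hεmean j,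
        add_zero]
      have hterm : ∀ k, ∫ ω, H j k * x ω k = H j k * c := by
        intro k; rw [integral_const_mul, hxmean k]
      rw [Finset.sum_congr rfl fun k _ => hterm k, ← Finset.sum_mul, hHrow j]
      ring
    have hfun : (fun ω => (Wt.mulVec (y ω)) i) = fun ω => ∑ j, Wt i j * y ω j := by
      funext ω; rfl
    rw [hfun, integral_finset_sum _ (fun j _ => (hyint j).const_mul _)]
    have hterm : ∀ j, ∫ ω, Wt i j * y ω j = Wt i j * (c * τ) := by
      intro j; rw [integral_const_mul, hymean j]
    rw [Finset.sum_congr rfl fun j _ => hterm j, ← Finset.sum_mul]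
    have hWtrow : ∑ j, Wt i j = τ⁻¹ := by
      have h := congrFun hWte i
      simpa [Matrix.mulVec, dotProduct, he] using h
    rw [hWtrow]
    field_simp
end

section
/- Let (Ω, 𝔉, ℙ) be a probability space and ε : Ω → ℝ^N a random vector with square-integrable entries satisfying E[ε] = 0 and E[ε εᵀ] = G. Let H be a real N×N matrix, δ₀ > 0, and let p(1), …, p(N) ≥ 0 with Σᵢ p(i) = 1; let P be the diagonal matrix with diagonal entries p(i). Assume δ₀² H Hᵀ + G is strictly positive definite. For a real N×N matrix W define the worst-case mean squared error F(W) = Σ_{i=1}^N p(i) · sup_{x ∈ ℝ^N, ‖x‖₂ ≤ δ₀} E[ ((W(Hx + ε))_i − x_i)² ]. Then for every real N×N matrix W, F(W) ≥ F(W_wmse) = δ₀² − δ₀⁴ tr((δ₀² H Hᵀ + G)⁻¹ H P Hᵀ), where W_wmse = δ₀² Hᵀ (δ₀² H Hᵀ + G)⁻¹. Moreover, if p(i) > 0 for every i, then W_wmse is the unique minimizer of F. -/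
open Matrix MeasureTheory

lemma int_mul_L2 {Ω : Type*} [MeasureSpace Ω] {f g : Ω → ℝ}
    (hf : MemLp f 2 volume) (hg : MemLp g 2 volume) :
    Integrable (fun ω => f ω * g ω) volume := by
  have h := (((hf.add hg).integrable_sq.sub hf.integrable_sq).sub hg.integrable_sq).div_const 2
  refine h.congr (Filter.Eventually.of_forall fun ω => ?_)
  simp only [Pi.sub_apply, Pi.add_apply]
  ring

lemma sup_quadratic {N : ℕ} (a : Fin N → ℝ) (c δ₀ : ℝ) (hδ : 0 < δ₀) :
    IsGreatest ((fun x : Fin N → ℝ => (∑ j, a j * x j) ^ 2 + c) ''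
      {x : Fin N → ℝ | euclNorm x ≤ δ₀}) (δ₀ ^ 2 * (∑ j, a j ^ 2) + c) := by
  constructor
  · obtain hs | hs := (Finset.sum_nonneg (s := (Finset.univ : Finset (Fin N)))
      (f := fun j => a j ^ 2) fun j _ => sq_nonneg (a j)).eq_or_lt
    · refine ⟨0, by simp [Set.mem_setOf_eq, euclNorm, hδ.le], ?_⟩
      show (∑ j, a j * (0 : Fin N → ℝ) j) ^ 2 + c = δ₀ ^ 2 * (∑ j, a j ^ 2) + c
      rw [← hs]
      simp
    · set s := ∑ j, a j ^ 2 with hsdef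
      have hss : 0 < Real.sqrt s := Real.sqrt_pos.mpr hs
      set t := δ₀ / Real.sqrt s with ht
      have htpos : 0 < t := div_pos hδ hss
      refine ⟨fun j => t * a j, ?_, ?_⟩
      · have h2 : ∑ j, (t * a j) ^ 2 = t ^ 2 * s := by
          rw [hsdef, Finset.mul_sum]; exact Finset.sum_congr rfl fun j _ => by ring
        simp only [Set.mem_setOf_eq, euclNorm, h2]
        rw [Real.sqrt_mul (sq_nonneg t), Real.sqrt_sq htpos.le, ht,
          div_mul_cancel₀ _ hss.ne']
      · show (∑ j, a j * (t * a j)) ^ 2 + c = δ₀ ^ 2 * s + c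
        have h1 : ∑ j, a j * (t * a j) = t * s := by
          rw [hsdef, Finset.mul_sum]; exact Finset.sum_congr rfl fun j _ => by ring
        rw [h1, ht, mul_pow, div_pow, Real.sq_sqrt hs.le]
        field_simp
  · rintro y ⟨x, hx, rfl⟩
    show (∑ j, a j * x j) ^ 2 + c ≤ δ₀ ^ 2 * (∑ j, a j ^ 2) + c
    have hx2 : ∑ j, x j ^ 2 ≤ δ₀ ^ 2 := by
      have h0 : 0 ≤ ∑ j, x j ^ 2 := Finset.sum_nonneg fun j _ => sq_nonneg _
      calc ∑ j, x j ^ 2 = Real.sqrt (∑ j, x j ^ 2) ^ 2 := (Real.sq_sqrt h0).symm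
        _ ≤ δ₀ ^ 2 := pow_le_pow_left₀ (Real.sqrt_nonneg _) hx 2
    have hcs := Finset.sum_mul_sq_le_sq_mul_sq Finset.univ a x
    have h3 : (∑ j, a j * x j) ^ 2 ≤ (∑ j, a j ^ 2) * δ₀ ^ 2 :=
      hcs.trans (mul_le_mul_of_nonneg_left hx2 (Finset.sum_nonneg fun j _ => sq_nonneg _))
    linarith [h3]

lemma integral_mse {N : ℕ} {Ω : Type*} [MeasureSpace Ω]
    [IsProbabilityMeasure (volume : Measure Ω)]
    (ε : Ω → Fin N → ℝ)
    (hεL2 : ∀ i, MemLp (fun ω => ε ω i) 2 volume)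
    (hεmean : ∀ i, ∫ ω, ε ω i = 0)
    (G : Matrix (Fin N) (Fin N) ℝ)
    (hG : ∀ i j, ∫ ω, ε ω i * ε ω j = G i j)
    (H W : Matrix (Fin N) (Fin N) ℝ) (x : Fin N → ℝ) (i : Fin N) :
    ∫ ω, ((W.mulVec (H.mulVec x + ε ω)) i - x i) ^ 2
      = (((W * H - 1).mulVec x) i) ^ 2 + ((W * G * Wᵀ : Matrix (Fin N) (Fin N) ℝ) i i) := by
  have hmul : ∀ f g : Ω → ℝ, MemLp f 2 volume → MemLp g 2 volume →
      Integrable (fun ω => f ω * g ω) volume := fun f g hf hg => int_mul_L2 hf hg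
  set b : ℝ := ((W * H - 1).mulVec x) i with hb
  set Z : Ω → ℝ := fun ω => ∑ j, W i j * ε ω j with hZ
  have hpt : ∀ ω, (W.mulVec (H.mulVec x + ε ω)) i - x i = b + Z ω := by
    intro ω
    simp only [hb, hZ, mulVec_add, Pi.add_apply, sub_mulVec, one_mulVec, Pi.sub_apply,
      ← mulVec_mulVec]
    have : (W.mulVec (ε ω)) i = ∑ j, W i j * ε ω j := rfl
    rw [this]; ring
  have hZL2 : MemLp Z 2 volume := by
    have h := memLp_finset_sum' Finset.univ
      (f := fun j (ω : Ω) => W i j * ε ω j) (fun j _ => (hεL2 j).const_mul (W i j))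
    rw [hZ]
    convert h using 1
    ext ω
    simp
  have hZint : Integrable Z volume := hZL2.integrable one_le_two
  have hZsq : Integrable (fun ω => Z ω ^ 2) volume := hZL2.integrable_sq
  have hintZmean : ∫ ω, Z ω = 0 := by
    rw [hZ]
    rw [integral_finset_sum _ (fun j _ => ((hεL2 j).integrable one_le_two).const_mul (W i j))]
    simp only [integral_const_mul, hεmean, mul_zero, Finset.sum_const_zero]
  have hintZsq : ∫ ω, Z ω ^ 2 = ((W * G * Wᵀ : Matrix (Fin N) (Fin N) ℝ) i i) := by
    have hsq : ∀ ω, Z ω ^ 2 = ∑ j, ∑ k, (W i j * W i k) * (ε ω j * ε ω k) := by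
      intro ω
      rw [hZ, sq, Finset.sum_mul_sum]
      exact Finset.sum_congr rfl fun j _ => Finset.sum_congr rfl fun k _ => by ring
    simp_rw [hsq]
    rw [integral_finset_sum _ (fun j _ => integrable_finset_sum _ (fun k _ =>
      (hmul _ _ (hεL2 j) (hεL2 k)).const_mul (W i j * W i k)))]
    have : ∀ j, ∫ ω, ∑ k, (W i j * W i k) * (ε ω j * ε ω k)
        = ∑ k, (W i j * W i k) * G j k := by
      intro j
      rw [integral_finset_sum _ (fun k _ =>
        (hmul _ _ (hεL2 j) (hεL2 k)).const_mul (W i j * W i k))]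
      exact Finset.sum_congr rfl fun k _ => by rw [integral_const_mul, hG]
    simp_rw [this]
    simp only [Matrix.mul_apply, transpose_apply, Finset.sum_mul, Finset.mul_sum]
    rw [Finset.sum_comm]
    exact Finset.sum_congr rfl fun k _ => Finset.sum_congr rfl fun j _ => by ring
  have hexp : ∀ ω, (b + Z ω) ^ 2 = b ^ 2 + 2 * b * Z ω + Z ω ^ 2 := fun ω => by ring
  simp_rw [hpt, hexp]
  have h1 : Integrable (fun ω => b ^ 2 + 2 * b * Z ω) volume :=
    (integrable_const _).add (hZint.const_mul _)
  have h2 : Integrable (fun ω => 2 * b * Z ω) volume := hZint.const_mul _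
  rw [integral_add h1 hZsq, integral_add (integrable_const _) h2,
    integral_const, integral_const_mul, hintZmean, hintZsq]
  simp

/-- for deterministic inputs `x` with `‖x‖₂ ≤ δ₀` observed through
`y = Hx + ε` (noise mean zero, covariance `G`, `δ₀² H Hᵀ + G` strictly positive
definite), the worst-case mean squared error
`F(W) = Σᵢ p(i) sup_{‖x‖₂ ≤ δ₀} E[((W(Hx+ε))ᵢ − xᵢ)²]` satisfies
`F(W) ≥ F(W_wmse) = δ₀² − δ₀⁴ tr((δ₀² H Hᵀ + G)⁻¹ H P Hᵀ)` for every `W`, where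
`W_wmse = δ₀² Hᵀ (δ₀² H Hᵀ + G)⁻¹`; moreover `W_wmse` is the unique minimizer
when all `p(i) > 0`. -/
theorem worst_case_wiener_filter_optimal {N : ℕ} {Ω : Type*} [MeasureSpace Ω]
    [IsProbabilityMeasure (volume : Measure Ω)]
    (ε : Ω → Fin N → ℝ)
    (hεL2 : ∀ i, MemLp (fun ω => ε ω i) 2 volume)
    (hεmean : ∀ i, ∫ ω, ε ω i = 0)
    (G : Matrix (Fin N) (Fin N) ℝ)
    (hG : ∀ i j, ∫ ω, ε ω i * ε ω j = G i j)
    (H : Matrix (Fin N) (Fin N) ℝ) (δ₀ : ℝ) (hδ : 0 < δ₀)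
    (p : Fin N → ℝ) (hp : ∀ i, 0 ≤ p i) (hpsum : ∑ i, p i = 1)
    (P : Matrix (Fin N) (Fin N) ℝ) (hP : P = Matrix.diagonal p)
    (hA : (δ₀ ^ 2 • (H * Hᵀ) + G).PosDef)
    (F : Matrix (Fin N) (Fin N) ℝ → ℝ)
    (hF : ∀ W, F W = ∑ i, p i * sSup ((fun x : Fin N → ℝ =>
        ∫ ω, ((W.mulVec (H.mulVec x + ε ω)) i - x i) ^ 2)
          '' {x : Fin N → ℝ | euclNorm x ≤ δ₀}))
    (Wwmse : Matrix (Fin N) (Fin N) ℝ)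
    (hW : Wwmse = δ₀ ^ 2 • (Hᵀ * (δ₀ ^ 2 • (H * Hᵀ) + G)⁻¹)) :
    (∀ W, F Wwmse ≤ F W) ∧
      F Wwmse = δ₀ ^ 2
        - δ₀ ^ 4 * Matrix.trace ((δ₀ ^ 2 • (H * Hᵀ) + G)⁻¹ * (H * P * Hᵀ)) ∧
      ((∀ i, 0 < p i) → ∀ W, F W = F Wwmse → W = Wwmse) := by
  set A : Matrix (Fin N) (Fin N) ℝ := δ₀ ^ 2 • (H * Hᵀ) + G with hAdef
  have hdet : IsUnit A.det := hA.det_pos.ne'.isUnit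
  have hAAi : A * A⁻¹ = 1 := Matrix.mul_nonsing_inv A hdet
  have hAiA : A⁻¹ * A = 1 := Matrix.nonsing_inv_mul A hdet
  have hAT : Aᵀ = A := by
    have h := hA.isHermitian
    rwa [Matrix.IsHermitian, Matrix.conjTranspose_eq_transpose_of_trivial] at h
  have hAiT : A⁻¹ᵀ = A⁻¹ := by rw [Matrix.transpose_nonsing_inv, hAT]
  set C : Matrix (Fin N) (Fin N) ℝ :=
    δ₀ ^ 2 • (1 : Matrix (Fin N) (Fin N) ℝ) - δ₀ ^ 4 • (Hᵀ * A⁻¹ * H) with hC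
  -- key decomposition
  have hdecomp : ∀ W : Matrix (Fin N) (Fin N) ℝ,
      δ₀ ^ 2 • ((W * H - 1) * (W * H - 1)ᵀ) + W * G * Wᵀ
        = (W - Wwmse) * A * (W - Wwmse)ᵀ + C := by
    intro W
    have hW0A : Wwmse * A = δ₀ ^ 2 • Hᵀ := by
      rw [hW, Matrix.smul_mul, Matrix.mul_assoc, hAiA, Matrix.mul_one]
    have hW0T : Wwmseᵀ = δ₀ ^ 2 • (A⁻¹ * H) := by
      rw [hW, Matrix.transpose_smul, Matrix.transpose_mul, Matrix.transpose_transpose, hAiT]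
    have hAW0T : A * Wwmseᵀ = δ₀ ^ 2 • H := by
      rw [hW0T, Matrix.mul_smul, ← Matrix.mul_assoc, hAAi, Matrix.one_mul]
    have key : (W - Wwmse) * A * (W - Wwmse)ᵀ
        = W * A * Wᵀ - W * (A * Wwmseᵀ) - Wwmse * A * Wᵀ + Wwmse * (A * Wwmseᵀ) := by
      simp only [Matrix.transpose_sub, Matrix.sub_mul, Matrix.mul_sub, ← Matrix.mul_assoc]
      abel
    have e1 : W * (A * Wwmseᵀ) = δ₀ ^ 2 • (W * H) := by
      rw [hAW0T, Matrix.mul_smul]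
    have e2 : Wwmse * A * Wᵀ = δ₀ ^ 2 • (Hᵀ * Wᵀ) := by
      rw [hW0A, Matrix.smul_mul]
    have e3 : Wwmse * (A * Wwmseᵀ) = δ₀ ^ 4 • (Hᵀ * A⁻¹ * H) := by
      rw [hAW0T, hW, Matrix.mul_smul, Matrix.smul_mul, smul_smul]
      have : δ₀ ^ 2 * δ₀ ^ 2 = δ₀ ^ 4 := by ring
      rw [this, Matrix.mul_assoc]
    have expand2 : δ₀ ^ 2 • ((W * H - 1) * (W * H - 1)ᵀ) + W * G * Wᵀ
        = W * A * Wᵀ - δ₀ ^ 2 • (W * H) - δ₀ ^ 2 • (Hᵀ * Wᵀ)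
          + δ₀ ^ 2 • (1 : Matrix (Fin N) (Fin N) ℝ) := by
      rw [hAdef]
      simp only [Matrix.transpose_sub, Matrix.transpose_mul, Matrix.transpose_one,
        Matrix.sub_mul, Matrix.mul_sub, Matrix.mul_one, Matrix.one_mul, smul_sub,
        Matrix.mul_add, Matrix.add_mul, Matrix.smul_mul, Matrix.mul_smul, Matrix.mul_assoc]
      abel
    rw [key, e1, e2, e3, expand2, hC]
    abel
  -- F in terms of the quadratic form matrix
  have hFeq : ∀ W : Matrix (Fin N) (Fin N) ℝ, F W = ∑ i : Fin N,
      p i * ((δ₀ ^ 2 • ((W * H - 1) * (W * H - 1)ᵀ) + W * G * Wᵀ : Matrix (Fin N) (Fin N) ℝ) i i) := by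
    intro W
    rw [hF]
    refine Finset.sum_congr rfl fun i _ => ?_
    congr 1
    have himg : (fun x : Fin N → ℝ =>
        ∫ ω, ((W.mulVec (H.mulVec x + ε ω)) i - x i) ^ 2) '' {x : Fin N → ℝ | euclNorm x ≤ δ₀}
        = (fun x : Fin N → ℝ => (∑ j, (W * H - 1) i j * x j) ^ 2 + ((W * G * Wᵀ : Matrix (Fin N) (Fin N) ℝ) i i))
          '' {x : Fin N → ℝ | euclNorm x ≤ δ₀} := by
      refine Set.image_congr fun x _ => ?_
      rw [integral_mse ε hεL2 hεmean G hG H W x i]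
      rfl
    rw [himg,
      (sup_quadratic (fun j => (W * H - 1) i j) (((W * G * Wᵀ : Matrix (Fin N) (Fin N) ℝ) i i)) δ₀ hδ).csSup_eq]
    simp only [Matrix.add_apply, Matrix.smul_apply, Matrix.mul_apply, transpose_apply,
      smul_eq_mul, pow_two]
  -- diagonal entries of B * A * Bᵀ are quadratic forms
  have hquad : ∀ (B : Matrix (Fin N) (Fin N) ℝ) (i : Fin N),
      ((B * A * Bᵀ : Matrix (Fin N) (Fin N) ℝ) i i) = (fun j => B i j) ⬝ᵥ (A *ᵥ fun j => B i j) := by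
    intro B i
    simp only [Matrix.mul_apply, transpose_apply, dotProduct, Matrix.mulVec,
      Finset.sum_mul, Finset.mul_sum]
    rw [Finset.sum_comm]
    exact Finset.sum_congr rfl fun k _ => Finset.sum_congr rfl fun j _ => by ring
  have hdiag_nonneg : ∀ (B : Matrix (Fin N) (Fin N) ℝ) (i : Fin N),
      0 ≤ ((B * A * Bᵀ : Matrix (Fin N) (Fin N) ℝ) i i) := by
    intro B i
    rw [hquad]
    have h := hA.posSemidef.dotProduct_mulVec_nonneg (fun j => B i j)
    simpa using h
  have hFW0 : F Wwmse = ∑ i : Fin N, p i * C i i := by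
    rw [hFeq, hdecomp Wwmse]
    refine Finset.sum_congr rfl fun i _ => ?_
    rw [sub_self, Matrix.zero_mul, Matrix.zero_mul, zero_add]
  have hFdiff : ∀ W : Matrix (Fin N) (Fin N) ℝ,
      F W = (∑ i : Fin N, p i * (((W - Wwmse) * A * (W - Wwmse)ᵀ : Matrix (Fin N) (Fin N) ℝ) i i)) + F Wwmse := by
    intro W
    rw [hFeq, hFW0, ← Finset.sum_add_distrib]
    refine Finset.sum_congr rfl fun i _ => ?_
    rw [hdecomp W]
    simp only [Matrix.add_apply]
    ring
  have hnn : ∀ W : Matrix (Fin N) (Fin N) ℝ,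
      0 ≤ ∑ i : Fin N, p i * (((W - Wwmse) * A * (W - Wwmse)ᵀ : Matrix (Fin N) (Fin N) ℝ) i i) :=
    fun W => Finset.sum_nonneg fun i _ => mul_nonneg (hp i) (hdiag_nonneg _ i)
  refine ⟨fun W => by rw [hFdiff W]; linarith [hnn W], ?_, ?_⟩
  · -- value at Wwmse
    rw [hFW0, hC]
    have e1 : ∀ i : Fin N, p i * ((δ₀ ^ 2 • (1 : Matrix (Fin N) (Fin N) ℝ)
        - δ₀ ^ 4 • (Hᵀ * A⁻¹ * H) : Matrix (Fin N) (Fin N) ℝ) i i)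
        = δ₀ ^ 2 * p i - δ₀ ^ 4 * (p i * ((Hᵀ * A⁻¹ * H : Matrix (Fin N) (Fin N) ℝ) i i)) := by
      intro i
      simp only [Matrix.sub_apply, Matrix.smul_apply, Matrix.one_apply_eq, smul_eq_mul]
      ring
    simp_rw [e1]
    rw [Finset.sum_sub_distrib, ← Finset.mul_sum, ← Finset.mul_sum, hpsum, mul_one]
    congr 1
    congr 1
    have htr1 : ∑ i : Fin N, p i * ((Hᵀ * A⁻¹ * H : Matrix (Fin N) (Fin N) ℝ) i i)
        = Matrix.trace (P * (Hᵀ * A⁻¹ * H)) := by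
      rw [hP, Matrix.trace]
      refine (Finset.sum_congr rfl fun i _ => ?_).symm
      rw [Matrix.diag_apply, Matrix.diagonal_mul]
    rw [htr1]
    have hassoc : P * (Hᵀ * A⁻¹ * H) = (P * Hᵀ) * (A⁻¹ * H) := by
      rw [Matrix.mul_assoc, Matrix.mul_assoc]
    rw [hassoc, Matrix.trace_mul_comm]
    congr 1
    simp [Matrix.mul_assoc]
  · -- uniqueness
    intro hppos W hFW
    have hsum0 : ∑ i : Fin N, p i * (((W - Wwmse) * A * (W - Wwmse)ᵀ : Matrix (Fin N) (Fin N) ℝ) i i) = 0 := by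
      have h := hFdiff W
      rw [hFW] at h
      linarith
    have hz : ∀ i ∈ Finset.univ, p i * (((W - Wwmse) * A * (W - Wwmse)ᵀ : Matrix (Fin N) (Fin N) ℝ) i i) = 0 :=
      (Finset.sum_eq_zero_iff_of_nonneg
        (fun i _ => mul_nonneg (hp i) (hdiag_nonneg _ i))).mp hsum0
    have hrow : ∀ i : Fin N, (fun j => (W - Wwmse) i j) = 0 := by
      intro i
      by_contra hne
      have hpos := hA.dotProduct_mulVec_pos (x := fun j => (W - Wwmse) i j) hne
      have hq := hquad (W - Wwmse) i
      have h0 := hz i (Finset.mem_univ i)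
      rcases mul_eq_zero.mp h0 with h | h
      · exact absurd h (hppos i).ne'
      · rw [hq] at h
        simp only [star_trivial] at hpos
        rw [h] at hpos
        exact lt_irrefl 0 hpos
    have hsub : W - Wwmse = 0 := by
      ext i j
      have := congrFun (hrow i) j
      simpa using this
    exact sub_eq_zero.mp hsub
end
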